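/- Full convolution identity (intermediate step in the proof of Theorem 2): for all integers a, b ≥ 1, every sequence c : ℕ → ℚ, and all n, k ≥ 1, (an + (b−2)k + 2)·∑_{ℓ=0}^{k} ∑_{m=ℓ}^{n} q_c(n−m, k−ℓ)·q_c(m, ℓ) = 2·(an + (b−1)k + 1)·q_c(n,k), where the boundary terms use q_c(0,0) = 1 and q_c(m,0) = 0 for m > 0, and an + (b−2)k + 2 is computed in ℚ. -/

import Mathlib

/-!
Put `Q_r(n,k) = r/(an+(b-1)k+r) · C(an+(b-1)k+r, k) · P_c(n,k)` (`raney`), so that `q_c = Q_1`.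
These are the coefficients of `B^r` for the series `B = 1 + y ∑_j c_j x^j B^(aj+b-1)`, and the
functional equation of `B` becomes the recurrence
`Q_{r+1}(n,k+1) = Q_r(n,k+1) + ∑_j c_j Q_{r+aj+b-1}(n-j,k)`.
It follows from splitting off the first part of a composition, together with the symmetry
`n P_c(n,k+1) = (k+1) ∑_j j c_j P_c(n-j,k)` (every part has the same distribution as the first).
Double induction on `k` and `r` turns the recurrence into the convolution law
`∑ Q_r(m,ℓ) Q_s(n-m,k-ℓ) = Q_{r+s}(n,k)`. For `r = s = 1` its left side is the sum in the
theorem, and `Q_2` is expressed through `Q_1` by `(N+2-k) C(N+2,k) = (N+2) C(N+1,k)`, where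
`N = an+(b-1)k`.
-/

/-- Weighted composition sum `P_c(n,k) = ∑ c_{m_1}⋯c_{m_k}` over compositions of `n`
into `k` positive parts; equals `(k!/n!)·B_{n,k}(1!c_1, 2!c_2, …)`. -/
def Pc (c : ℕ → ℚ) (n k : ℕ) : ℚ :=
  ∑ f ∈ (Finset.Nat.antidiagonalTuple k n).filter (fun f => ∀ i, 0 < f i),
    ∏ i, c (f i)

/-- `q_c(n,k) = (1/(an+(b-1)k+1))·C(an+(b-1)k+1, k)·P_c(n,k)`. -/
def qc (a b : ℕ) (c : ℕ → ℚ) (n k : ℕ) : ℚ :=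
  (1 / ((a * n + (b - 1) * k + 1 : ℕ) : ℚ)) *
    (((a * n + (b - 1) * k + 1).choose k : ℕ) : ℚ) * Pc c n k

open Finset

def compositions (k n : ℕ) : Finset (Fin k → ℕ) :=
  (Finset.Nat.antidiagonalTuple k n).filter (fun f => ∀ i, 0 < f i)

theorem mem_compositions {k n : ℕ} {f : Fin k → ℕ} :
    f ∈ compositions k n ↔ ∑ i, f i = n ∧ ∀ i, 0 < f i := by
  simp [compositions, Finset.Nat.mem_antidiagonalTuple]

theorem Pc_eq_sum_compositions (c : ℕ → ℚ) (n k : ℕ) :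
    Pc c n k = ∑ f ∈ compositions k n, ∏ i, c (f i) :=
  rfl

theorem Pc_zero_right (c : ℕ → ℚ) (n : ℕ) : Pc c n 0 = if n = 0 then 1 else 0 := by
  cases n <;> simp [Pc, Finset.Nat.antidiagonalTuple_zero_succ]

theorem compositions_eq_empty_of_lt {k n : ℕ} (h : n < k) : compositions k n = ∅ := by
  refine eq_empty_of_forall_notMem fun f hf => ?_
  obtain ⟨hsum, hpos⟩ := mem_compositions.mp hf
  have : k ≤ n := by simpa [← hsum] using Finset.card_nsmul_le_sum univ f 1 fun i _ => hpos i
  omega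

theorem Pc_eq_zero_of_lt (c : ℕ → ℚ) {n k : ℕ} (h : n < k) : Pc c n k = 0 := by
  rw [Pc_eq_sum_compositions, compositions_eq_empty_of_lt h, sum_empty]

theorem sum_compositions_succ {β : Type*} [AddCommMonoid β] {k : ℕ}
    (g : ℕ → (Fin k → ℕ) → β) (n : ℕ) :
    ∑ f ∈ compositions (k + 1) n, g (f 0) (Fin.tail f)
      = ∑ j ∈ Icc 1 n, ∑ t ∈ compositions k (n - j), g j t := by
  rw [sum_sigma']
  refine sum_nbij' (fun f => ⟨f 0, Fin.tail f⟩) (fun p => Fin.cons p.1 p.2) ?_ ?_ ?_ ?_ ?_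
  · intro f hf
    obtain ⟨hsum, hpos⟩ := mem_compositions.mp hf
    rw [Fin.sum_univ_succ] at hsum
    simp only [mem_sigma, mem_Icc, mem_compositions]
    exact ⟨⟨hpos 0, by omega⟩, by simp only [Fin.tail]; omega, fun i => hpos i.succ⟩
  · rintro ⟨j, t⟩ hp
    simp only [mem_sigma, mem_Icc, mem_compositions] at hp ⊢
    obtain ⟨⟨hj, hjn⟩, htsum, htpos⟩ := hp
    exact ⟨by rw [Fin.sum_cons, htsum]; omega, Fin.cases hj htpos⟩
  · intro f _
    exact Fin.cons_self_tail f
  · rintro ⟨j, t⟩ _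
    simp
  · intro f _
    rfl

theorem sum_compositions_comp_perm {β : Type*} [AddCommMonoid β] {k : ℕ} (n : ℕ)
    (σ : Equiv.Perm (Fin k)) (g : (Fin k → ℕ) → β) :
    ∑ f ∈ compositions k n, g (f ∘ σ) = ∑ f ∈ compositions k n, g f := by
  have hmem : ∀ (τ : Equiv.Perm (Fin k)) f,
      f ∈ compositions k n → f ∘ τ ∈ compositions k n := by
    intro τ f hf
    obtain ⟨hsum, hpos⟩ := mem_compositions.mp hf
    exact mem_compositions.mpr ⟨(Equiv.sum_comp τ f).trans hsum, fun i => hpos (τ i)⟩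
  refine sum_nbij' (· ∘ σ) (· ∘ σ.symm) (hmem σ) (hmem σ.symm)
    (fun f _ => ?_) (fun f _ => ?_) (fun f _ => rfl)
  · ext i; simp
  · ext i; simp

theorem Pc_succ (c : ℕ → ℚ) (n k : ℕ) :
    Pc c n (k + 1) = ∑ j ∈ Icc 1 n, c j * Pc c (n - j) k := by
  simp_rw [Pc_eq_sum_compositions, Fin.prod_univ_succ, mul_sum]
  exact sum_compositions_succ (fun j t => c j * ∏ i, c (t i)) n

theorem mul_Pc_succ (c : ℕ → ℚ) (n k : ℕ) :
    (n : ℚ) * Pc c n (k + 1) = (k + 1) * ∑ j ∈ Icc 1 n, j * (c j * Pc c (n - j) k) := by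
  have hsymm : ∀ i : Fin (k + 1), ∑ f ∈ compositions (k + 1) n, (f i : ℚ) * ∏ i, c (f i)
      = ∑ f ∈ compositions (k + 1) n, (f 0 : ℚ) * ∏ i, c (f i) := fun i => by
    rw [← sum_compositions_comp_perm n (Equiv.swap 0 i)]
    refine sum_congr rfl fun f _ => ?_
    simp [Equiv.prod_comp (Equiv.swap 0 i) fun j => c (f j)]
  have hfirst : ∑ f ∈ compositions (k + 1) n, (f 0 : ℚ) * ∏ i, c (f i)
      = ∑ j ∈ Icc 1 n, j * (c j * Pc c (n - j) k) := by
    simp_rw [Pc_eq_sum_compositions, Fin.prod_univ_succ, mul_sum]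
    exact sum_compositions_succ (fun j t => (j : ℚ) * (c j * ∏ i, c (t i))) n
  calc (n : ℚ) * Pc c n (k + 1)
      = ∑ f ∈ compositions (k + 1) n, (∑ i, (f i : ℚ)) * ∏ i, c (f i) := by
        rw [Pc_eq_sum_compositions, mul_sum]
        refine sum_congr rfl fun f hf => ?_
        rw [← (mem_compositions.mp hf).1]
        push_cast
        rfl
    _ = ∑ i : Fin (k + 1), ∑ f ∈ compositions (k + 1) n, (f i : ℚ) * ∏ i, c (f i) := by
        simp_rw [sum_mul]
        exact sum_comm
    _ = (k + 1) * ∑ j ∈ Icc 1 n, j * (c j * Pc c (n - j) k) := by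
        simp [hsymm, hfirst]

theorem cast_add_one_sub_mul_choose {R : Type*} [CommRing R] (m k : ℕ) :
    ((m : R) + 1 - k) * ((m + 1).choose k : ℕ) = (m + 1) * (m.choose k : ℕ) := by
  rcases le_or_gt k (m + 1) with hk | hk
  · have h := Nat.choose_mul_succ_eq m k
    rw [mul_comm] at h
    have h' := congrArg (Nat.cast : ℕ → R) h
    push_cast [Nat.cast_sub hk] at h'
    linear_combination -h'
  · simp [Nat.choose_eq_zero_of_lt hk, Nat.choose_eq_zero_of_lt (Nat.lt_of_succ_lt hk)]

theorem div_mul_choose_succ_sub {K : Type*} [Field K] [CharZero K] (M r k : ℕ) (hM : M ≠ 0) :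
    ((r : K) + 1) / (M + 1) * ((M + 1).choose (k + 1) : ℕ) - r / M * (M.choose (k + 1) : ℕ)
      = (M.choose k : ℕ) * (M + r * k) / (M * (k + 1)) := by
  have hpascal := congrArg (Nat.cast : ℕ → K) (Nat.choose_succ_succ' M k)
  have habsorb := congrArg (Nat.cast : ℕ → K) (Nat.add_one_mul_choose_eq M k)
  push_cast at hpascal habsorb
  have hM' : (M : K) ≠ 0 := Nat.cast_ne_zero.mpr hM
  field_simp
  linear_combination (r * (M + 1) * (k + 1) : K) * hpascal - (M - r : K) * habsorb

theorem sum_range_sum_Icc_one_comm {β : Type*} [AddCommMonoid β] (g : ℕ → ℕ → ℕ → β)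
    (n : ℕ) :
    ∑ m ∈ range (n + 1), ∑ j ∈ Icc 1 m, g j (m - j) (n - m)
      = ∑ j ∈ Icc 1 n, ∑ i ∈ range (n - j + 1), g j i (n - j - i) := by
  rw [sum_comm' (t' := Icc 1 n) (s' := fun j => Icc j n)
    (by intro m j; simp only [mem_range, mem_Icc]; omega)]
  refine sum_congr rfl fun j hj => ?_
  obtain ⟨-, hjn⟩ := mem_Icc.mp hj
  rw [← Ico_add_one_right_eq_Icc, sum_Ico_eq_sum_range, show n + 1 - j = n - j + 1 by omega]
  refine sum_congr rfl fun i hi => ?_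
  rw [mem_range] at hi
  rw [show j + i - j = i by omega, show n - (j + i) = n - j - i by omega]

-- At `(0,0)` the value is set to `1` by hand: for `r = 0` the formula would give `0/0`.
def raney (a b : ℕ) (c : ℕ → ℚ) (r n k : ℕ) : ℚ :=
  if n = 0 ∧ k = 0 then 1
  else (r / ((a * n + (b - 1) * k + r : ℕ) : ℚ)) *
    (((a * n + (b - 1) * k + r).choose k : ℕ) : ℚ) * Pc c n k

section Raney

variable (a b : ℕ) (c : ℕ → ℚ)

theorem raney_of_ne_zero {r n k : ℕ} (hk : k ≠ 0) :
    raney a b c r n k = (r / ((a * n + (b - 1) * k + r : ℕ) : ℚ)) *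
      (((a * n + (b - 1) * k + r).choose k : ℕ) : ℚ) * Pc c n k := by
  rw [raney, if_neg (by tauto)]

theorem raney_of_pos {r : ℕ} (hr : 0 < r) (n k : ℕ) :
    raney a b c r n k = (r / ((a * n + (b - 1) * k + r : ℕ) : ℚ)) *
      (((a * n + (b - 1) * k + r).choose k : ℕ) : ℚ) * Pc c n k := by
  rw [raney]
  split_ifs with h
  · obtain ⟨rfl, rfl⟩ := h
    simp [Pc_zero_right, hr.ne']
  · rfl

theorem raney_zero_left (n k : ℕ) : raney a b c 0 n k = if n = 0 ∧ k = 0 then 1 else 0 := by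
  simp [raney]

theorem raney_zero_right (r n : ℕ) : raney a b c r n 0 = if n = 0 then 1 else 0 := by
  rcases eq_or_ne n 0 with rfl | hn <;> simp [raney, Pc_zero_right, *]

theorem raney_eq_zero_of_lt (r : ℕ) {n k : ℕ} (h : n < k) : raney a b c r n k = 0 := by
  rw [raney_of_ne_zero a b c (by omega), Pc_eq_zero_of_lt c h, mul_zero]

theorem qc_eq_raney (n k : ℕ) : qc a b c n k = raney a b c 1 n k := by
  rw [raney_of_pos a b c one_pos, qc, Nat.cast_one]

theorem sum_mul_raney_shift (ha : 0 < a) (r n k : ℕ) :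
    ∑ j ∈ Icc 1 n, c j * raney a b c (r + a * j + (b - 1)) (n - j) k
      = ((a * n + (b - 1) * (k + 1) + r).choose k : ℕ)
          / ((a * n + (b - 1) * (k + 1) + r : ℕ) : ℚ)
        * ((r + (b - 1 : ℕ)) * ∑ j ∈ Icc 1 n, c j * Pc c (n - j) k
          + a * ∑ j ∈ Icc 1 n, j * (c j * Pc c (n - j) k)) := by
  rw [mul_add, mul_sum, mul_sum, mul_sum, mul_sum, ← sum_add_distrib]
  refine sum_congr rfl fun j hj => ?_
  obtain ⟨hj1, hjn⟩ := mem_Icc.mp hj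
  have hidx : a * (n - j) + (b - 1) * k + (r + a * j + (b - 1))
      = a * n + (b - 1) * (k + 1) + r := by
    have : a * (n - j) + a * j = a * n := by rw [← Nat.mul_add, Nat.sub_add_cancel hjn]
    linarith [Nat.mul_succ (b - 1) k]
  rw [raney_of_pos a b c (by positivity), hidx]
  push_cast
  ring

theorem raney_succ_succ (ha : 0 < a) (r n k : ℕ) :
    raney a b c (r + 1) n (k + 1)
      = raney a b c r n (k + 1)
        + ∑ j ∈ Icc 1 n, c j * raney a b c (r + a * j + (b - 1)) (n - j) k := by
  rcases Nat.eq_zero_or_pos n with rfl | hn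
  · simp [raney_eq_zero_of_lt]
  rw [sum_mul_raney_shift a b c ha, ← Pc_succ, raney_of_ne_zero a b c k.add_one_ne_zero,
    raney_of_ne_zero a b c k.add_one_ne_zero]
  set M := a * n + (b - 1) * (k + 1) + r with hM
  have hM0 : M ≠ 0 := by positivity
  have hstep := div_mul_choose_succ_sub (K := ℚ) M r k hM0
  have hMcast : (M : ℚ) = a * n + (b - 1 : ℕ) * (k + 1) + r := by rw [hM]; push_cast; ring
  rw [show a * n + (b - 1) * (k + 1) + (r + 1) = M + 1 by omega]
  have hW : ∑ j ∈ Icc 1 n, (j : ℚ) * (c j * Pc c (n - j) k)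
      = n * Pc c n (k + 1) / (k + 1) := by
    rw [mul_Pc_succ]; field_simp
  push_cast at hstep ⊢
  rw [← sub_eq_iff_eq_add', ← sub_mul, hstep, hW]
  field_simp
  linear_combination ((M.choose k : ℕ) * Pc c n (k + 1) : ℚ) * hMcast

def raneyConv (r s n k : ℕ) : ℚ :=
  ∑ ℓ ∈ range (k + 1), ∑ m ∈ range (n + 1),
    raney a b c r m ℓ * raney a b c s (n - m) (k - ℓ)

theorem raneyConv_zero_right (r s n : ℕ) : raneyConv a b c r s n 0 = raney a b c (r + s) n 0 := by
  rw [raneyConv, sum_range_one, sum_eq_single 0 (fun m _ hm => by simp [raney_zero_right, hm])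
    (by simp)]
  simp [raney_zero_right]

theorem raneyConv_zero_left (s n k : ℕ) : raneyConv a b c 0 s n k = raney a b c s n k := by
  simp [raneyConv, raney_zero_left, ite_and]

theorem raneyConv_succ_sub (ha : 0 < a) (r s n k : ℕ) :
    raneyConv a b c (r + 1) s n (k + 1) - raneyConv a b c r s n (k + 1)
      = ∑ j ∈ Icc 1 n, c j * raneyConv a b c (r + a * j + (b - 1)) s (n - j) k := by
  simp only [raneyConv, ← sum_sub_distrib, ← sub_mul]
  rw [sum_range_succ']
  simp only [raney_zero_right, sub_self, zero_mul, sum_const_zero, add_zero,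
    raney_succ_succ a b c ha, add_sub_cancel_left, Nat.add_sub_add_right, sum_mul, mul_assoc]
  simp only [mul_sum]
  rw [sum_comm (s := Icc 1 n)]
  exact sum_congr rfl fun ℓ _ => sum_range_sum_Icc_one_comm
    (fun j i t => c j * (raney a b c (r + a * j + (b - 1)) i ℓ * raney a b c s t (k - ℓ))) n

theorem raneyConv_eq (ha : 0 < a) (k : ℕ) :
    ∀ r s n, raneyConv a b c r s n k = raney a b c (r + s) n k := by
  induction k with
  | zero => exact raneyConv_zero_right a b c
  | succ k ihk =>
    intro r s n
    induction r with
    | zero => rw [raneyConv_zero_left, zero_add]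
    | succ r ihr =>
      have hsub := raneyConv_succ_sub a b c ha r s n k
      simp only [ihk, ihr] at hsub
      rw [add_right_comm, raney_succ_succ a b c ha, ← sub_eq_iff_eq_add', hsub]
      refine sum_congr rfl fun j _ => ?_
      rw [show r + a * j + (b - 1) + s = r + s + a * j + (b - 1) by ring]

theorem sum_Icc_qc_mul_qc (n k : ℕ) :
    ∑ ℓ ∈ range (k + 1), ∑ m ∈ Icc ℓ n, qc a b c (n - m) (k - ℓ) * qc a b c m ℓ
      = raneyConv a b c 1 1 n k := by
  refine sum_congr rfl fun ℓ _ => sum_subset_zero_on_sdiff (fun m hm => ?_) (fun m hm => ?_)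
    (fun m _ => by rw [qc_eq_raney, qc_eq_raney, mul_comm])
  · simp only [mem_Icc, mem_range] at hm ⊢; omega
  · simp only [mem_sdiff, mem_Icc, mem_range] at hm
    rw [raney_eq_zero_of_lt a b c 1 (by omega : m < ℓ), zero_mul]

end Raney

theorem qc_full_convolution_general (a b : ℕ) (ha : 1 ≤ a) (hb : 1 ≤ b) (c : ℕ → ℚ)
    (n k : ℕ) :
    ((a : ℚ) * n + ((b : ℚ) - 2) * k + 2) *
        ∑ ℓ ∈ Finset.range (k + 1), ∑ m ∈ Finset.Icc ℓ n,
          qc a b c (n - m) (k - ℓ) * qc a b c m ℓ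
      = 2 * ((a * n + (b - 1) * k + 1 : ℕ) : ℚ) * qc a b c n k := by
  rw [sum_Icc_qc_mul_qc, raneyConv_eq a b c ha, qc_eq_raney, raney_of_pos a b c (Nat.succ_pos 1),
    raney_of_pos a b c one_pos]
  set E := a * n + (b - 1) * k with hE
  have hchoose := cast_add_one_sub_mul_choose (R := ℚ) (E + 1) k
  have hEcast : (E : ℚ) = a * n + (b - 1) * k := by rw [hE]; push_cast [Nat.cast_sub hb]; ring
  rw [show E + 2 = E + 1 + 1 from rfl]
  push_cast at hchoose ⊢
  field_simp
  linear_combination Pc c n k * hchoose - Pc c n k * ((E + 1 + 1).choose k : ℕ) * hEcast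

/-- Full convolution identity: intermediate step in the proof of Theorem 2. -/
theorem qc_full_convolution (a b : ℕ) (ha : 1 ≤ a) (hb : 1 ≤ b) (c : ℕ → ℚ)
    (n k : ℕ) (hn : 1 ≤ n) (hk : 1 ≤ k) :
    ((a : ℚ) * n + ((b : ℚ) - 2) * k + 2) *
        ∑ ℓ ∈ Finset.range (k + 1), ∑ m ∈ Finset.Icc ℓ n,
          qc a b c (n - m) (k - ℓ) * qc a b c m ℓ
      = 2 * ((a * n + (b - 1) * k + 1 : ℕ) : ℚ) * qc a b c n k :=
  qc_full_convolution_general a b ha hb c n k
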